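/- arXiv:2408.05157 — 4 statements merged into one kernel-verified Lean document; each statement's English description precedes it below -/
import Mathlib

section
/- Let $q_1 \equiv q_2 \equiv 3 \pmod 4$ be distinct primes with $q_1 q_2 \equiv 1 \pmod 8$, and let $u_1 = x + y\sqrt{q_1 q_2}$ (with $x, y$ positive integers) be the fundamental unit of $\mathbb{Q}(\sqrt{q_1 q_2})$. Then $N(u_1) = 1$ and $\frac{x+1}{2}$ equals $q_1 m^2$ or $q_2 m^2$ for some positive integer $m$ dividing $y/2$. In particular, the squarefree part of $N(u_1 + 1) = 2(x+1)$ is $q_1$ or $q_2$. -/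
/-!
A solution of `x² - q₁q₂y² = -1` would make `-1` a square mod `q₁ ≡ 3 (mod 4)`, so `N(u₁) = 1`.
As `q₁q₂ ≡ 1 (mod 4)`, this forces `x = 2k + 1` and `y = 2l`, and then `(k + 1) k = q₁q₂l²`
with coprime factors. Each `qᵢ` divides exactly one of them and the cofactors are squares.
If `q₁q₂ ∣ k + 1` the squares give a solution of the negative Pell equation; if `q₁q₂ ∣ k`
they give the smaller unit `m + n√(q₁q₂)` with `m² = k + 1`, `n ∣ l`, contradicting
minimality. Hence `(x + 1)/2 = k + 1` is `q₁m²` or `q₂m²`.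
-/

theorem sq_sub_mul_sq_ne_neg_one {q : ℕ} (hq : q.Prime) (hq3 : q % 4 = 3) {D : ℤ}
    (hqD : (q : ℤ) ∣ D) (a b : ℤ) : a ^ 2 - D * b ^ 2 ≠ -1 := by
  have := Fact.mk hq
  intro h
  have hD : (D : ZMod q) = 0 := (ZMod.intCast_zmod_eq_zero_iff_dvd D q).mpr hqD
  have ha : (a : ZMod q) ^ 2 = -1 := by
    simpa [hD] using congrArg (fun z : ℤ => (z : ZMod q)) h
  exact ZMod.exists_sq_eq_neg_one_iff.mp ⟨a, by rw [← ha, sq]⟩ hq3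

theorem odd_and_even_of_sq_sub_mul_sq_eq_one {D x y : ℤ} (hD : D % 4 = 1)
    (h : x ^ 2 - D * y ^ 2 = 1) : Odd x ∧ Even y := by
  obtain ⟨d, rfl⟩ : ∃ d, D = 4 * d + 1 := ⟨D / 4, by omega⟩
  obtain ⟨a, rfl | rfl⟩ := Int.even_or_odd' x <;> obtain ⟨b, rfl | rfl⟩ := Int.even_or_odd' y
  all_goals ring_nf at h
  all_goals first | omega | exact ⟨odd_two_mul_add_one a, even_two_mul b⟩

theorem Int.exists_pos_dvd_eq_sq_of_isCoprime {a b c : ℤ} (hab : IsCoprime a b) (ha : 0 < a)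
    (h : a * b = c ^ 2) : ∃ m, 0 < m ∧ m ∣ c ∧ a = m ^ 2 := by
  obtain ⟨m, hm | hm⟩ := Int.sq_of_isCoprime hab h
  · have hm0 : m ≠ 0 := by rintro rfl; simp [hm] at ha
    refine ⟨|m|, abs_pos.mpr hm0, (abs_dvd _ _).mpr ?_, by rw [hm, sq_abs]⟩
    exact (Int.pow_dvd_pow_iff two_ne_zero).mp ⟨b, by rw [← h, hm]⟩
  · nlinarith [sq_nonneg m]

theorem Int.exists_eq_mul_sq_of_isCoprime {A B c d b : ℤ} (hAB : IsCoprime A B) (hA : 0 < A)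
    (hB : 0 < B) (hc : 0 < c) (hd : 0 < d) (hcA : c ∣ A) (hdB : d ∣ B)
    (h : A * B = c * d * b ^ 2) :
    ∃ m n, 0 < m ∧ 0 < n ∧ m ∣ b ∧ n ∣ b ∧ A = c * m ^ 2 ∧ B = d * n ^ 2 := by
  obtain ⟨A', rfl⟩ := hcA
  obtain ⟨B', rfl⟩ := hdB
  have hA' : 0 < A' := (pos_iff_pos_of_mul_pos hA).mp hc
  have hB' : 0 < B' := (pos_iff_pos_of_mul_pos hB).mp hd
  have hcop : IsCoprime A' B' := hAB.of_mul_left_right.of_mul_right_right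
  have hsq : A' * B' = b ^ 2 :=
    mul_left_cancel₀ (mul_pos hc hd).ne' (by linear_combination h)
  obtain ⟨m, hm, hmb, rfl⟩ := exists_pos_dvd_eq_sq_of_isCoprime hcop hA' hsq
  obtain ⟨n, hn, hnb, rfl⟩ :=
    exists_pos_dvd_eq_sq_of_isCoprime hcop.symm hB' (by rw [mul_comm, hsq])
  exact ⟨m, n, hm, hn, hmb, hnb, rfl, rfl⟩

theorem add_mul_sqrt_lt_add_mul_sqrt {a b c d : ℤ} {D : ℝ} (hD : 0 < D) (hac : a ≤ c)
    (hbd : b < d) : (a : ℝ) + b * √D < c + d * √D :=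
  add_lt_add_of_le_of_lt (mod_cast hac)
    (mul_lt_mul_of_pos_right (mod_cast hbd) (Real.sqrt_pos.mpr hD))

theorem Int.succ_mul_eq_mul_mul_sq_cases {p q k l : ℤ} (hp : Prime p) (hq : Prime q)
    (hpq : IsCoprime p q) (hp0 : 0 < p) (hq0 : 0 < q) (hk : 0 < k)
    (h : (k + 1) * k = p * q * l ^ 2) :
    ∃ m n, 0 < m ∧ 0 < n ∧ m ∣ l ∧ n ∣ l ∧
      (k + 1 = p * q * m ^ 2 ∧ k = n ^ 2 ∨ k + 1 = p * m ^ 2 ∧ k = q * n ^ 2 ∨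
        k + 1 = q * m ^ 2 ∧ k = p * n ^ 2 ∨ k + 1 = m ^ 2 ∧ k = p * q * n ^ 2) := by
  have factor {c d : ℤ} (hc : 0 < c) (hd : 0 < d) (hcA : c ∣ k + 1) (hdB : d ∣ k)
      (hcd : c * d = p * q) :=
    exists_eq_mul_sq_of_isCoprime (b := l) ⟨1, -1, by ring⟩ (by omega) hk hc hd hcA hdB
      (by rw [h, hcd])
  rcases hp.dvd_mul.mp ⟨q * l ^ 2, by rw [h]; ring⟩ with hpA | hpB <;>
    rcases hq.dvd_mul.mp ⟨p * l ^ 2, by rw [h]; ring⟩ with hqA | hqB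
  · obtain ⟨m, n, hm, hn, hml, hnl, hA, hB⟩ :=
      factor (mul_pos hp0 hq0) one_pos (hpq.mul_dvd hpA hqA) (one_dvd k) (mul_one _)
    exact ⟨m, n, hm, hn, hml, hnl, .inl ⟨hA, by rw [hB, one_mul]⟩⟩
  · obtain ⟨m, n, hm, hn, hml, hnl, hA, hB⟩ := factor hp0 hq0 hpA hqB rfl
    exact ⟨m, n, hm, hn, hml, hnl, .inr (.inl ⟨hA, hB⟩)⟩
  · obtain ⟨m, n, hm, hn, hml, hnl, hA, hB⟩ := factor hq0 hp0 hqA hpB (mul_comm q p)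
    exact ⟨m, n, hm, hn, hml, hnl, .inr (.inr (.inl ⟨hA, hB⟩))⟩
  · obtain ⟨m, n, hm, hn, hml, hnl, hA, hB⟩ :=
      factor one_pos (mul_pos hp0 hq0) (one_dvd _) (hpq.mul_dvd hpB hqB) (one_mul _)
    exact ⟨m, n, hm, hn, hml, hnl, .inr (.inr (.inr ⟨by rw [hA, one_mul], hB⟩))⟩

theorem stmt_4_general (q1 q2 : ℕ) (hq1 : q1.Prime) (hq2 : q2.Prime) (hne : q1 ≠ q2)
    (h1 : q1 % 4 = 3) (h2 : q2 % 4 = 3)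
    (x y : ℤ) (hx : 0 < x) (hy : 0 < y)
    (hunit : x ^ 2 - (q1 : ℤ) * q2 * y ^ 2 = 1 ∨ x ^ 2 - (q1 : ℤ) * q2 * y ^ 2 = -1)
    (hfund : ∀ a b : ℤ, 0 < a → 0 < b →
      (a ^ 2 - (q1 : ℤ) * q2 * b ^ 2 = 1 ∨ a ^ 2 - (q1 : ℤ) * q2 * b ^ 2 = -1) →
      (x : ℝ) + y * Real.sqrt (q1 * q2) ≤ (a : ℝ) + b * Real.sqrt (q1 * q2)) :
    x ^ 2 - (q1 : ℤ) * q2 * y ^ 2 = 1 ∧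
      (∃ m : ℤ, 0 < m ∧ m ∣ y / 2 ∧
        ((x + 1) / 2 = (q1 : ℤ) * m ^ 2 ∨ (x + 1) / 2 = (q2 : ℤ) * m ^ 2)) ∧
      ∃ k : ℤ, 2 * (x + 1) = (q1 : ℤ) * k ^ 2 ∨ 2 * (x + 1) = (q2 : ℤ) * k ^ 2 := by
  have hq1pos : (0 : ℤ) < q1 := mod_cast hq1.pos
  have hq2pos : (0 : ℤ) < q2 := mod_cast hq2.pos
  have hDpos := mul_pos hq1pos hq2pos
  have hnegPell := sq_sub_mul_sq_ne_neg_one hq1 h1 (dvd_mul_right (q1 : ℤ) q2)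
  have hnorm := hunit.resolve_right (hnegPell x y)
  have hD4 : ((q1 : ℤ) * q2) % 4 = 1 := by
    rw [Int.mul_emod, show (q1 : ℤ) % 4 = 3 by omega, show (q2 : ℤ) % 4 = 3 by omega]; rfl
  obtain ⟨⟨k, rfl⟩, ⟨l, rfl⟩⟩ := odd_and_even_of_sq_sub_mul_sq_eq_one hD4 hnorm
  have hkl : (k + 1) * k = q1 * q2 * l ^ 2 := by linarith
  have hl : 0 < l := by omega
  have hk : 0 < k := by nlinarith [mul_pos hDpos (pow_pos hl 2)]
  rw [show (2 * k + 1 + 1) / 2 = k + 1 by omega, show (l + l) / 2 = l by omega]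
  refine ⟨hnorm, ?_⟩
  obtain ⟨m, n, hm, hn, hml, hnl, ⟨hA, hB⟩ | ⟨hA, -⟩ | ⟨hA, -⟩ | ⟨hA, hB⟩⟩ :=
    Int.succ_mul_eq_mul_mul_sq_cases (Nat.prime_iff_prime_int.mp hq1)
      (Nat.prime_iff_prime_int.mp hq2)
      (Nat.isCoprime_iff_coprime.mpr ((Nat.coprime_primes hq1 hq2).mpr hne)) hq1pos hq2pos hk hkl
  · exact absurd (by linear_combination hA - hB) (hnegPell n m)
  · exact ⟨⟨m, hm, hml, .inl hA⟩, 2 * m, .inl (by linear_combination 4 * hA)⟩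
  · exact ⟨⟨m, hm, hml, .inr hA⟩, 2 * m, .inr (by linear_combination 4 * hA)⟩
  · have hsmaller := add_mul_sqrt_lt_add_mul_sqrt (D := q1 * q2) (mod_cast hDpos)
      (show m ≤ 2 * k + 1 by nlinarith) (show n < l + l by linarith [Int.le_of_dvd hl hnl])
    exact absurd (hfund m n hm hn (.inl (by linear_combination hB - hA))) hsmaller.not_ge

theorem stmt_4 (q1 q2 : ℕ) (hq1 : q1.Prime) (hq2 : q2.Prime) (hne : q1 ≠ q2)
    (h1 : q1 % 4 = 3) (h2 : q2 % 4 = 3) (h8 : (q1 * q2) % 8 = 1)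
    (x y : ℤ) (hx : 0 < x) (hy : 0 < y)
    (hunit : x ^ 2 - (q1 : ℤ) * q2 * y ^ 2 = 1 ∨ x ^ 2 - (q1 : ℤ) * q2 * y ^ 2 = -1)
    (hfund : ∀ a b : ℤ, 0 < a → 0 < b →
      (a ^ 2 - (q1 : ℤ) * q2 * b ^ 2 = 1 ∨ a ^ 2 - (q1 : ℤ) * q2 * b ^ 2 = -1) →
      (x : ℝ) + y * Real.sqrt (q1 * q2) ≤ (a : ℝ) + b * Real.sqrt (q1 * q2)) :
    x ^ 2 - (q1 : ℤ) * q2 * y ^ 2 = 1 ∧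
      (∃ m : ℤ, 0 < m ∧ m ∣ y / 2 ∧
        ((x + 1) / 2 = (q1 : ℤ) * m ^ 2 ∨ (x + 1) / 2 = (q2 : ℤ) * m ^ 2)) ∧
      ∃ k : ℤ, 2 * (x + 1) = (q1 : ℤ) * k ^ 2 ∨ 2 * (x + 1) = (q2 : ℤ) * k ^ 2 :=
  stmt_4_general q1 q2 hq1 hq2 hne h1 h2 x y hx hy hunit hfund
end

section
/- Let $q_1 \equiv q_2 \equiv 3 \pmod 4$ be distinct primes and let $u_1 = x + y\sqrt{q_1 q_2}$ be the fundamental unit of $\mathbb{Q}(\sqrt{q_1 q_2})$ with $x, y$ positive integers. Then $\frac{x+1}{2}$ is not a perfect square. -/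
private lemma aux_fact (p r M A C : ℕ) (hp : p.Prime) (hr : r.Prime) (hpr : p ≠ r)
    (hM : M ≠ 0) (hA : A ≠ 0) (hC : C ≠ 0) (hA0 : ¬ p ∣ A)
    (heq : M ^ 2 * A = p * r * C ^ 2) : False := by
  have h := congrArg (fun n : ℕ => n.factorization p) heq
  rw [Nat.factorization_mul (pow_ne_zero 2 hM) hA,
    Nat.factorization_mul (Nat.mul_ne_zero hp.pos.ne' hr.pos.ne') (pow_ne_zero 2 hC),
    Nat.factorization_mul hp.pos.ne' hr.pos.ne',
    Nat.factorization_pow, Nat.factorization_pow] at h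
  simp only [Finsupp.coe_add, Finsupp.coe_smul, Pi.add_apply, Pi.smul_apply,
    smul_eq_mul] at h
  rw [Nat.Prime.factorization_self hp, Nat.factorization_eq_zero_of_not_dvd hA0,
    Nat.factorization_eq_zero_of_not_dvd
      (fun hd => hpr ((Nat.prime_dvd_prime_iff_eq hp hr).1 hd))] at h
  omega

private lemma aux_nodvd (p r : ℕ) (hp : p.Prime) (hr : r.Prime) (hpr : p ≠ r)
    (m c : ℤ) (hm : 2 ≤ m) (hc : 0 < c)
    (hkey : m ^ 2 * (m ^ 2 - 1) = (p : ℤ) * r * c ^ 2) : ¬ (p : ℤ) ∣ m := by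
  intro hdm
  have hqA : ¬ (p : ℤ) ∣ m ^ 2 - 1 := by
    intro h
    obtain ⟨l, hl⟩ := hdm
    obtain ⟨k, hk⟩ := h
    have hd1 : (p : ℤ) ∣ 1 := ⟨p * l * l - k, by linear_combination (m + p * l) * hl - hk⟩
    have := Int.le_of_dvd one_pos hd1
    have := hp.two_le
    omega
  set M : ℕ := m.toNat with hMdef
  set C : ℕ := c.toNat with hCdef
  set A : ℕ := (m ^ 2 - 1).toNat with hAdef
  have hMm : (M : ℤ) = m := Int.toNat_of_nonneg (by omega)
  have hCc : (C : ℤ) = c := Int.toNat_of_nonneg (le_of_lt hc)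
  have hAa : (A : ℤ) = m ^ 2 - 1 := Int.toNat_of_nonneg (by nlinarith)
  have hnat : M ^ 2 * A = p * r * C ^ 2 := by
    have : ((M ^ 2 * A : ℕ) : ℤ) = ((p * r * C ^ 2 : ℕ) : ℤ) := by
      push_cast [hMm, hCc, hAa]
      linarith [hkey]
    exact_mod_cast this
  have hA0 : ¬ p ∣ A := by
    intro h
    exact hqA (by rw [← hAa]; exact_mod_cast h)
  exact aux_fact p r M A C hp hr hpr (by omega)
    (by have : (0:ℤ) < m ^ 2 - 1 := by nlinarith
        omega)
    (by omega) hA0 hnat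

theorem stmt_5 (q1 q2 : ℕ) (hq1 : q1.Prime) (hq2 : q2.Prime) (hne : q1 ≠ q2)
    (h1 : q1 % 4 = 3) (h2 : q2 % 4 = 3)
    (x y : ℤ) (hx : 0 < x) (hy : 0 < y)
    (hunit : x ^ 2 - (q1 : ℤ) * q2 * y ^ 2 = 1 ∨ x ^ 2 - (q1 : ℤ) * q2 * y ^ 2 = -1)
    (hfund : ∀ a b : ℤ, 0 < a → 0 < b →
      (a ^ 2 - (q1 : ℤ) * q2 * b ^ 2 = 1 ∨ a ^ 2 - (q1 : ℤ) * q2 * b ^ 2 = -1) →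
      (x : ℝ) + y * Real.sqrt (q1 * q2) ≤ (a : ℝ) + b * Real.sqrt (q1 * q2)) :
    ¬ IsSquare ((x + 1) / 2) := by
  intro ⟨m₀, hm₀⟩
  set N : ℤ := (q1 : ℤ) * q2 with hN
  -- rule out the -1 case
  haveI : Fact q1.Prime := ⟨hq1⟩
  have hpell : x ^ 2 - N * y ^ 2 = 1 := by
    rcases hunit with h | h
    · exact h
    · exfalso
      have hsq : IsSquare (-1 : ZMod q1) := by
        refine ⟨(x : ZMod q1), ?_⟩
        have : ((x ^ 2 - N * y ^ 2 : ℤ) : ZMod q1) = ((-1 : ℤ) : ZMod q1) := by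
          rw [h]
        push_cast [hN] at this
        simp only [ZMod.natCast_self, zero_mul, mul_zero, sub_zero] at this
        linear_combination - this
      rw [ZMod.exists_sq_eq_neg_one_iff] at hsq
      exact hsq h1
  -- N % 4 = 1
  have hN4 : N % 4 = 1 := by
    have hnat : (q1 * q2) % 4 = 1 := by rw [Nat.mul_mod, h1, h2]
    have : ((q1 * q2 : ℕ) : ℤ) % 4 = 1 := by exact_mod_cast hnat
    push_cast at this
    rw [hN]
    exact this
  -- x is odd
  have hxodd : x % 2 = 1 := by
    rcases Int.even_or_odd x with ⟨a, ha⟩ | ⟨a, ha⟩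
    · exfalso
      rcases Int.even_or_odd y with ⟨b, hb⟩ | ⟨b, hb⟩
      · subst ha hb
        have : 4 * (a * a - N * (b * b)) = 1 := by ring_nf; ring_nf at hpell; linarith
        omega
      · subst ha hb
        have : 4 * (a * a - N * (b * b) - N * b) = 1 + N := by
          ring_nf; ring_nf at hpell; linarith
        omega
    · omega
  -- y is even
  have hyeven : y % 2 = 0 := by
    rcases Int.even_or_odd y with ⟨b, hb⟩ | ⟨b, hb⟩
    · omega
    · exfalso
      obtain ⟨a, ha⟩ : ∃ a, x = 2 * a + 1 := ⟨(x - 1) / 2, by omega⟩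
      subst ha hb
      have : 4 * (N * (b * b) + N * b - a * a - a) + N = 0 := by
        ring_nf; ring_nf at hpell; linarith
      omega
  obtain ⟨c, hc⟩ : ∃ c, y = 2 * c := ⟨y / 2, by omega⟩
  have hcpos : 0 < c := by omega
  -- normalize m to be nonnegative
  set m : ℤ := |m₀| with hmdef
  have hm : (x + 1) / 2 = m * m := by
    rw [hm₀, hmdef, abs_mul_abs_self]
  have hmnonneg : 0 ≤ m := abs_nonneg _
  have hxm : x = 2 * (m * m) - 1 := by omega
  have hNpos : 0 < N := by
    have := hq1.pos; have := hq2.pos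
    positivity
  have hx1 : x ≠ 1 := by
    intro h
    rw [h] at hpell
    have h0 : N * y ^ 2 = 0 := by linarith
    rcases mul_eq_zero.1 h0 with h' | h'
    · omega
    · nlinarith
  have hm2 : 2 ≤ m := by
    rcases (by omega : m = 0 ∨ m = 1 ∨ 2 ≤ m) with h | h | h
    · rw [h] at hxm; omega
    · rw [h] at hxm; norm_num at hxm; exact absurd hxm hx1
    · exact h
  -- key equation : m^2 * (m^2 - 1) = N * c^2
  have hp2 : (2 * (m * m) - 1) ^ 2 - N * (2 * c) ^ 2 = 1 := by
    rw [← hxm, ← hc]; exact hpell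
  have hkey : m ^ 2 * (m ^ 2 - 1) = N * c ^ 2 :=
    mul_left_cancel₀ (by norm_num : (4:ℤ) ≠ 0) (by linear_combination hp2)
  -- q1 and q2 do not divide m
  have hq1m : ¬ (q1 : ℤ) ∣ m := aux_nodvd q1 q2 hq1 hq2 hne m c hm2 hcpos hkey
  have hq2m : ¬ (q2 : ℤ) ∣ m :=
    aux_nodvd q2 q1 hq2 hq1 (fun h => hne h.symm) m c hm2 hcpos
      (by push_cast [hN] at hkey; linear_combination hkey)
  -- m is coprime to N, hence m ∣ c
  have hq1p : Prime (q1 : ℤ) := Int.prime_iff_natAbs_prime.2 (by simpa using hq1)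
  have hq2p : Prime (q2 : ℤ) := Int.prime_iff_natAbs_prime.2 (by simpa using hq2)
  have hcop : IsCoprime m N :=
    IsCoprime.mul_right (hq1p.coprime_iff_not_dvd.2 hq1m).symm
      (hq2p.coprime_iff_not_dvd.2 hq2m).symm
  have hmc : m ∣ c := by
    rw [← Int.pow_dvd_pow_iff (by norm_num : (2:ℕ) ≠ 0)]
    have hdvd : m ^ 2 ∣ N * c ^ 2 := ⟨m ^ 2 - 1, by linear_combination - hkey⟩
    exact (hcop.pow_left (m := 2)).dvd_of_dvd_mul_left hdvd
  obtain ⟨n, hn⟩ := hmc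
  have hnpos : 0 < n := by
    rcases lt_trichotomy n 0 with h | h | h
    · nlinarith
    · rw [h, mul_zero] at hn; omega
    · exact h
  -- m^2 - N n^2 = 1
  have hmn : m ^ 2 - N * n ^ 2 = 1 := by
    have h' : m ^ 2 * (m ^ 2 - 1) = m ^ 2 * (N * n ^ 2) := by
      rw [hkey, hn]; ring
    have := mul_left_cancel₀ (by positivity : (m:ℤ) ^ 2 ≠ 0) h'
    linarith
  -- contradiction with minimality
  have hlt := hfund m n (by omega) hnpos (Or.inl hmn)
  have hs : (0:ℝ) < Real.sqrt (q1 * q2) := by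
    apply Real.sqrt_pos.2
    have := hq1.pos; have := hq2.pos
    positivity
  have hmx : m < x := by
    have h' : m * 2 ≤ m * m := mul_le_mul_of_nonneg_left hm2 (by omega)
    omega
  have hny : n < y := by
    have h' : 2 * n ≤ m * n := mul_le_mul_of_nonneg_right hm2 (by omega)
    have hn' : c = m * n := hn
    omega
  have hcontra : (m : ℝ) + n * Real.sqrt (q1 * q2) < x + y * Real.sqrt (q1 * q2) := by
    have h1' : (m : ℝ) < x := by exact_mod_cast hmx
    have h2' : (n : ℝ) * Real.sqrt (q1 * q2) < y * Real.sqrt (q1 * q2) := by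
      apply mul_lt_mul_of_pos_right _ hs
      exact_mod_cast hny
    linarith
  linarith
end

section
/- Let $p_1 \equiv p_2 \equiv 3 \pmod 4$, $p_3 \equiv 1 \pmod 4$ be distinct primes with $p_1 p_2 p_3 \equiv 1 \pmod 8$, $\left(\frac{p_1}{p_2}\right) = 1$, $\left(\frac{p_1}{p_3}\right) = 1$, and $\left(\frac{p_2}{p_3}\right) = -1$. Let $u_2 = x + y\sqrt{p_1 p_2 p_3}$ be the fundamental unit of $\mathbb{Q}(\sqrt{p_1 p_2 p_3})$ with $x, y$ positive integers. Then $\frac{x+1}{2} = p_1 m^2$ for some positive integer $m$; in particular, the squarefree part of $N(u_2 + 1)$ is $p_1$. -/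
/-- Decomposition of coprime factors of `d1*d2*w^2`. -/
lemma aux_decomp (d1 d2 a b w : ℤ) (hd1pos : 0 < d1) (hd2pos : 0 < d2)
    (ha : 0 < a) (hb : 0 < b) (hcop : IsCoprime a b)
    (h1 : d1 ∣ a) (h2 : d2 ∣ b) (h : a * b = d1 * d2 * w ^ 2) :
    ∃ u v : ℤ, 0 < u ∧ 0 < v ∧ a = d1 * u ^ 2 ∧ b = d2 * v ^ 2 ∧ u ^ 2 * v ^ 2 = w ^ 2 := by
  obtain ⟨a', ha'⟩ := h1
  obtain ⟨b', hb'⟩ := h2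
  have ha'pos : 0 < a' := by
    have h0 : 0 < d1 * a' := ha' ▸ ha
    rcases mul_pos_iff.mp h0 with ⟨_, h⟩ | ⟨h, _⟩
    · exact h
    · linarith
  have hb'pos : 0 < b' := by
    have h0 : 0 < d2 * b' := hb' ▸ hb
    rcases mul_pos_iff.mp h0 with ⟨_, h⟩ | ⟨h, _⟩
    · exact h
    · linarith
  have hcop' : IsCoprime a' b' :=
    (hcop.of_isCoprime_of_dvd_left ⟨d1, by rw [ha']; ring⟩).of_isCoprime_of_dvd_right
      ⟨d2, by rw [hb']; ring⟩
  have key : a' * b' = w ^ 2 := by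
    have h2' : d1 * d2 * (a' * b') = d1 * d2 * w ^ 2 := by rw [← h, ha', hb']; ring
    exact mul_left_cancel₀ (by positivity) h2'
  obtain ⟨u, hu⟩ := Int.sq_of_isCoprime hcop' key
  obtain ⟨v, hv⟩ := Int.sq_of_isCoprime hcop'.symm (by rw [mul_comm] at key; exact key)
  have hu' : a' = u ^ 2 := by
    rcases hu with h' | h'
    · exact h'
    · nlinarith [sq_nonneg u]
  have hv' : b' = v ^ 2 := by
    rcases hv with h' | h'
    · exact h'
    · nlinarith [sq_nonneg v]
  have hune : u ≠ 0 := by intro h0; rw [h0] at hu'; simp at hu'; omega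
  have hvne : v ≠ 0 := by intro h0; rw [h0] at hv'; simp at hv'; omega
  refine ⟨|u|, |v|, abs_pos.mpr hune, abs_pos.mpr hvne, ?_, ?_, ?_⟩
  · rw [sq_abs, ha', hu']
  · rw [sq_abs, hb', hv']
  · rw [sq_abs, sq_abs, ← hu', ← hv', key]

/-- If `d2 * v^2 - d1 * u^2 = 1` and `q ∣ d1`, then `d2` is a QR mod `q`. -/
lemma aux_leg (q : ℕ) [Fact q.Prime] (d1 d2 u v : ℤ) (hq : (q : ℤ) ∣ d1)
    (h : d2 * v ^ 2 - d1 * u ^ 2 = 1) : legendreSym q d2 = 1 := by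
  obtain ⟨c, hc⟩ := hq
  rw [hc] at h
  have h1 : (d2 : ZMod q) * (v : ZMod q) ^ 2 = 1 := by
    have h' := congrArg (fun t : ℤ => (t : ZMod q)) h
    push_cast at h'
    rw [ZMod.natCast_self] at h'
    linear_combination h'
  have hv : (v : ZMod q) ≠ 0 := fun h0 => by rw [h0] at h1; simp at h1
  have hd2 : ((d2 : ℤ) : ZMod q) ≠ 0 := fun h0 => by rw [h0] at h1; simp at h1
  refine (legendreSym.eq_one_iff q hd2).mpr ⟨(v : ZMod q)⁻¹, ?_⟩
  field_simp
  linear_combination h1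

set_option maxHeartbeats 1000000 in
theorem stmt_11 (p1 p2 p3 : ℕ) [Fact p1.Prime] [Fact p2.Prime] [Fact p3.Prime]
    (h12 : p1 ≠ p2) (h13 : p1 ≠ p3) (h23 : p2 ≠ p3)
    (m1 : p1 % 4 = 3) (m2 : p2 % 4 = 3) (m3 : p3 % 4 = 1)
    (h8 : (p1 * p2 * p3) % 8 = 1)
    (hleg12 : legendreSym p2 p1 = 1) (hleg13 : legendreSym p3 p1 = 1)
    (hleg23 : legendreSym p3 p2 = -1)
    (x y : ℤ) (hx : 0 < x) (hy : 0 < y)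
    (hunit : x ^ 2 - (p1 : ℤ) * p2 * p3 * y ^ 2 = 1 ∨
      x ^ 2 - (p1 : ℤ) * p2 * p3 * y ^ 2 = -1)
    (hfund : ∀ a b : ℤ, 0 < a → 0 < b →
      (a ^ 2 - (p1 : ℤ) * p2 * p3 * b ^ 2 = 1 ∨ a ^ 2 - (p1 : ℤ) * p2 * p3 * b ^ 2 = -1) →
      (x : ℝ) + y * Real.sqrt (p1 * p2 * p3) ≤ (a : ℝ) + b * Real.sqrt (p1 * p2 * p3)) :
    ∃ m : ℤ, 0 < m ∧ (x + 1) / 2 = (p1 : ℤ) * m ^ 2 := by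
  have hp1 : p1.Prime := Fact.out
  have hp2 : p2.Prime := Fact.out
  have hp3 : p3.Prime := Fact.out
  have hp1z : Prime (p1 : ℤ) := Nat.prime_iff_prime_int.mp hp1
  have hp2z : Prime (p2 : ℤ) := Nat.prime_iff_prime_int.mp hp2
  have hp3z : Prime (p3 : ℤ) := Nat.prime_iff_prime_int.mp hp3
  have hp1ne2 : p1 ≠ 2 := by intro h; rw [h] at m1; norm_num at m1
  have hp2ne2 : p2 ≠ 2 := by intro h; rw [h] at m2; norm_num at m2
  -- Legendre symbol values via reciprocity
  have L12 : legendreSym p1 (p2 : ℤ) = -1 := by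
    have h := legendreSym.quadratic_reciprocity_three_mod_four m2 m1
    rw [hleg12] at h; exact h
  have L13 : legendreSym p1 (p3 : ℤ) = 1 := by
    have h := legendreSym.quadratic_reciprocity_one_mod_four m3 hp1ne2
    rw [hleg13] at h; exact h
  have L23 : legendreSym p2 (p3 : ℤ) = -1 := by
    have h := legendreSym.quadratic_reciprocity_one_mod_four m3 hp2ne2
    rw [hleg23] at h; exact h
  -- coprimality of the primes (as integers)
  have c12 : IsCoprime (p1 : ℤ) (p2 : ℤ) :=
    Nat.isCoprime_iff_coprime.mpr ((Nat.coprime_primes hp1 hp2).mpr h12)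
  have c13 : IsCoprime (p1 : ℤ) (p3 : ℤ) :=
    Nat.isCoprime_iff_coprime.mpr ((Nat.coprime_primes hp1 hp3).mpr h13)
  have c23 : IsCoprime (p2 : ℤ) (p3 : ℤ) :=
    Nat.isCoprime_iff_coprime.mpr ((Nat.coprime_primes hp2 hp3).mpr h23)
  have hDpos : (0 : ℤ) < (p1 : ℤ) * p2 * p3 := by
    have := hp1.pos; have := hp2.pos; have := hp3.pos; positivity
  -- the norm is +1
  have heq : x ^ 2 - (p1 : ℤ) * p2 * p3 * y ^ 2 = 1 := by
    rcases hunit with h | h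
    · exact h
    · exfalso
      have hc := congrArg (fun t : ℤ => (t : ZMod p1)) h
      push_cast at hc
      rw [ZMod.natCast_self] at hc
      have hc' : ((x : ZMod p1)) ^ 2 = -1 := by linear_combination hc
      exact ZMod.mod_four_ne_three_of_sq_eq_neg_one hc' m1
  -- mod 4 analysis : x odd, y even
  have hD4 : ((p1 * p2 * p3 : ℕ) : ZMod 4) = 1 := by
    have hm : (p1 * p2 * p3) % 4 = 1 := by omega
    rw [← ZMod.natCast_mod (p1 * p2 * p3) 4, hm, Nat.cast_one]
  have hc4 := congrArg (fun t : ℤ => (t : ZMod 4)) heq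
  push_cast at hc4 hD4
  rw [show ((x : ZMod 4)) ^ 2 - (p1 : ZMod 4) * p2 * p3 * (y : ZMod 4) ^ 2
      = (x : ZMod 4) ^ 2 - 1 * (y : ZMod 4) ^ 2 by rw [← hD4]] at hc4
  have key4 : ∀ a b : ZMod 4, a ^ 2 - 1 * b ^ 2 = 1 → (a = 1 ∨ a = 3) ∧ (b = 0 ∨ b = 2) := by
    decide
  obtain ⟨hX, hY⟩ := key4 _ _ hc4
  have hyev : (2 : ℤ) ∣ y := by
    rcases hY with h0 | h2
    · have h4 : (4 : ℤ) ∣ y := by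
        exact_mod_cast (ZMod.intCast_zmod_eq_zero_iff_dvd y 4).mp h0
      exact dvd_trans ⟨2, by norm_num⟩ h4
    · have h' : ((y - 2 : ℤ) : ZMod 4) = 0 := by push_cast; rw [h2]; ring
      have h4 : (4 : ℤ) ∣ y - 2 := by
        exact_mod_cast (ZMod.intCast_zmod_eq_zero_iff_dvd (y - 2) 4).mp h'
      obtain ⟨c, hc⟩ := h4
      exact ⟨2 * c + 1, by linarith⟩
  have hxodd : ¬ (2 : ℤ) ∣ x := by
    rintro ⟨t, ht⟩
    have hxt : ((x : ZMod 4)) = 2 * (t : ZMod 4) := by rw [ht]; push_cast; ring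
    have key2 : ∀ t : ZMod 4, 2 * t ≠ 1 ∧ 2 * t ≠ 3 := by decide
    rcases hX with h | h
    · exact (key2 _).1 (by rw [← hxt]; exact h)
    · exact (key2 _).2 (by rw [← hxt]; exact h)
  obtain ⟨k, hk⟩ : ∃ k, x = 2 * k + 1 := by
    rcases Int.even_or_odd x with h | h
    · exact absurd h.two_dvd hxodd
    · exact h
  obtain ⟨w, hw⟩ := hyev
  have hwpos : 0 < w := by omega
  have hkpos : 0 < k := by
    by_contra hnk
    have hk0 : k = 0 := by omega
    rw [hk, hw, hk0] at heq
    nlinarith [mul_pos hDpos (mul_pos hwpos hwpos)]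
  have hmain : k * (k + 1) = (p1 : ℤ) * p2 * p3 * w ^ 2 := by
    have h4 : 4 * (k * (k + 1)) = 4 * ((p1 : ℤ) * p2 * p3 * w ^ 2) := by
      rw [hk, hw] at heq; linear_combination heq
    exact mul_left_cancel₀ (by norm_num) h4
  have hcop : IsCoprime k (k + 1) := ⟨-1, 1, by ring⟩
  have hk1pos : 0 < k + 1 := by linarith
  have hx1 : (x + 1) / 2 = k + 1 := by omega
  -- divisibility case analysis
  have hd1 : (p1 : ℤ) ∣ k ∨ (p1 : ℤ) ∣ (k + 1) :=
    hp1z.dvd_mul.mp (by rw [hmain]; exact ⟨(p2 : ℤ) * p3 * w ^ 2, by ring⟩)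
  have hd2 : (p2 : ℤ) ∣ k ∨ (p2 : ℤ) ∣ (k + 1) :=
    hp2z.dvd_mul.mp (by rw [hmain]; exact ⟨(p1 : ℤ) * p3 * w ^ 2, by ring⟩)
  have hd3 : (p3 : ℤ) ∣ k ∨ (p3 : ℤ) ∣ (k + 1) :=
    hp3z.dvd_mul.mp (by rw [hmain]; exact ⟨(p1 : ℤ) * p2 * w ^ 2, by ring⟩)
  have hp1pos : (0 : ℤ) < p1 := by exact_mod_cast hp1.pos
  have hp2pos : (0 : ℤ) < p2 := by exact_mod_cast hp2.pos
  have hp3pos : (0 : ℤ) < p3 := by exact_mod_cast hp3.pos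
  rcases hd1 with h1 | h1 <;> rcases hd2 with h2 | h2 <;> rcases hd3 with h3 | h3
  -- case 1 : p1,p2,p3 ∣ k : fundamental unit contradiction
  · exfalso
    have hdall : (p1 : ℤ) * p2 * p3 ∣ k := by
      have h12' : (p1 : ℤ) * p2 ∣ k := c12.mul_dvd h1 h2
      exact (IsCoprime.mul_left c13 c23).mul_dvd h12' h3
    obtain ⟨u, v, hu, hv, ha, hb, huv⟩ :=
      aux_decomp ((p1 : ℤ) * p2 * p3) 1 k (k + 1) w hDpos one_pos hkpos hk1pos hcop
        hdall (one_dvd _) (by linear_combination hmain)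
    have hpell : v ^ 2 - (p1 : ℤ) * p2 * p3 * u ^ 2 = 1 := by linear_combination ha - hb
    have hs := hfund v u hv hu (Or.inl hpell)
    -- x = v^2 + D u^2, y = 2uv
    have huvw : u * v = w := by
      have hfac : (u * v - w) * (u * v + w) = 0 := by linear_combination huv
      rcases mul_eq_zero.mp hfac with h' | h'
      · linarith
      · nlinarith [mul_pos hu hv]
    have hxv : x = v ^ 2 + (p1 : ℤ) * p2 * p3 * u ^ 2 := by
      rw [hk]; linear_combination ha + hb
    have hyv : y = 2 * (u * v) := by rw [hw, huvw]
    set r : ℝ := Real.sqrt ((p1 : ℝ) * p2 * p3) with hr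
    have hrsq : r ^ 2 = (p1 : ℝ) * p2 * p3 := Real.sq_sqrt (by positivity)
    have hP1 : (1 : ℝ) ≤ (p1 : ℝ) * p2 * p3 := by
      exact_mod_cast (show (1 : ℤ) ≤ (p1 : ℤ) * p2 * p3 from hDpos)
    have hrpos : 1 ≤ r := by
      nlinarith [Real.sqrt_nonneg ((p1 : ℝ) * p2 * p3), hrsq, hP1]
    have hx' : (x : ℝ) = (v : ℝ) ^ 2 + (p1 : ℝ) * p2 * p3 * (u : ℝ) ^ 2 := by
      exact_mod_cast congrArg (fun t : ℤ => (t : ℝ)) hxv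
    have hy' : (y : ℝ) = 2 * ((u : ℝ) * (v : ℝ)) := by
      exact_mod_cast congrArg (fun t : ℤ => (t : ℝ)) hyv
    have hxy : (x : ℝ) + y * r = ((v : ℝ) + u * r) ^ 2 := by
      rw [hx', hy']; linear_combination -((u : ℝ) ^ 2 * hrsq)
    have hu1 : (1 : ℝ) ≤ (u : ℝ) := by exact_mod_cast hu
    have hv1 : (1 : ℝ) ≤ (v : ℝ) := by exact_mod_cast hv
    rw [hxy] at hs
    have hs2 : (2 : ℝ) ≤ (v : ℝ) + u * r := by nlinarith [hu1, hv1, hrpos]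
    nlinarith [hs, hs2]
  -- case 2 : p1,p2 ∣ k, p3 ∣ k+1 : legendre contradiction mod p2
  · exfalso
    have hdk : (p1 : ℤ) * p2 ∣ k := c12.mul_dvd h1 h2
    obtain ⟨u, v, hu, hv, ha, hb, huv⟩ :=
      aux_decomp ((p1 : ℤ) * p2) (p3 : ℤ) k (k + 1) w (by positivity) hp3pos hkpos hk1pos hcop
        hdk h3 (by linear_combination hmain)
    have := aux_leg p2 ((p1 : ℤ) * p2) (p3 : ℤ) u v ⟨(p1 : ℤ), by ring⟩
      (by linear_combination ha - hb)
    rw [this] at L23; norm_num at L23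
  -- case 3 : p1,p3 ∣ k, p2 ∣ k+1 : legendre contradiction mod p1
  · exfalso
    have hdk : (p1 : ℤ) * p3 ∣ k := c13.mul_dvd h1 h3
    obtain ⟨u, v, hu, hv, ha, hb, huv⟩ :=
      aux_decomp ((p1 : ℤ) * p3) (p2 : ℤ) k (k + 1) w (by positivity) hp2pos hkpos hk1pos hcop
        hdk h2 (by linear_combination hmain)
    have := aux_leg p1 ((p1 : ℤ) * p3) (p2 : ℤ) u v ⟨(p3 : ℤ), rfl⟩
      (by linear_combination ha - hb)
    rw [this] at L12; norm_num at L12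
  -- case 4 : p1 ∣ k, p2,p3 ∣ k+1 : legendre contradiction mod p1
  · exfalso
    have hdk1 : (p2 : ℤ) * p3 ∣ k + 1 := c23.mul_dvd h2 h3
    obtain ⟨u, v, hu, hv, ha, hb, huv⟩ :=
      aux_decomp (p1 : ℤ) ((p2 : ℤ) * p3) k (k + 1) w hp1pos (by positivity) hkpos hk1pos hcop
        h1 hdk1 (by linear_combination hmain)
    have hone := aux_leg p1 (p1 : ℤ) ((p2 : ℤ) * p3) u v dvd_rfl
      (by linear_combination ha - hb)
    rw [legendreSym.mul, L12, L13] at hone; norm_num at hone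
  -- case 5 : p1 ∣ k+1, p2,p3 ∣ k : the good case
  · have hdk : (p2 : ℤ) * p3 ∣ k := c23.mul_dvd h2 h3
    obtain ⟨u, v, hu, hv, ha, hb, huv⟩ :=
      aux_decomp ((p2 : ℤ) * p3) (p1 : ℤ) k (k + 1) w (by positivity) hp1pos hkpos hk1pos hcop
        hdk h1 (by linear_combination hmain)
    exact ⟨v, hv, by rw [hx1, hb]⟩
  -- case 6 : p2 ∣ k, p1,p3 ∣ k+1 : legendre contradiction mod p2
  · exfalso
    have hdk1 : (p1 : ℤ) * p3 ∣ k + 1 := c13.mul_dvd h1 h3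
    obtain ⟨u, v, hu, hv, ha, hb, huv⟩ :=
      aux_decomp (p2 : ℤ) ((p1 : ℤ) * p3) k (k + 1) w hp2pos (by positivity) hkpos hk1pos hcop
        h2 hdk1 (by linear_combination hmain)
    have hone := aux_leg p2 (p2 : ℤ) ((p1 : ℤ) * p3) u v dvd_rfl
      (by linear_combination ha - hb)
    rw [legendreSym.mul, hleg12, L23] at hone; norm_num at hone
  -- case 7 : p3 ∣ k, p1,p2 ∣ k+1 : legendre contradiction mod p3
  · exfalso
    have hdk1 : (p1 : ℤ) * p2 ∣ k + 1 := c12.mul_dvd h1 h2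
    obtain ⟨u, v, hu, hv, ha, hb, huv⟩ :=
      aux_decomp (p3 : ℤ) ((p1 : ℤ) * p2) k (k + 1) w hp3pos (by positivity) hkpos hk1pos hcop
        h3 hdk1 (by linear_combination hmain)
    have hone := aux_leg p3 (p3 : ℤ) ((p1 : ℤ) * p2) u v dvd_rfl
      (by linear_combination ha - hb)
    rw [legendreSym.mul, hleg13, hleg23] at hone; norm_num at hone
  -- case 8 : p1,p2,p3 ∣ k+1 : -1 is a square mod p1, contradiction
  · exfalso
    have hdall : (p1 : ℤ) * p2 * p3 ∣ k + 1 := by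
      have h12' : (p1 : ℤ) * p2 ∣ k + 1 := c12.mul_dvd h1 h2
      exact (IsCoprime.mul_left c13 c23).mul_dvd h12' h3
    obtain ⟨u, v, hu, hv, ha, hb, huv⟩ :=
      aux_decomp 1 ((p1 : ℤ) * p2 * p3) k (k + 1) w one_pos hDpos hkpos hk1pos hcop
        (one_dvd _) hdall (by linear_combination hmain)
    have hmod : (p1 : ℤ) * (p2 * p3 * v ^ 2) = u ^ 2 + 1 := by linear_combination ha - hb
    have hc := congrArg (fun t : ℤ => (t : ZMod p1)) hmod
    push_cast at hc
    rw [ZMod.natCast_self] at hc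
    have hc' : ((u : ZMod p1)) ^ 2 = -1 := by linear_combination -hc
    exact ZMod.mod_four_ne_three_of_sq_eq_neg_one hc' m1
end

section
/- Let $p_1 \equiv p_2 \equiv 3 \pmod 4$, $p_3 \equiv 1 \pmod 4$ be distinct primes with $p_1 p_2 p_3 \equiv 1 \pmod 8$ and $\left(\frac{p_1}{p_3}\right) = \left(\frac{p_2}{p_3}\right) = -1$. Let $u_2 = x + y\sqrt{p_1 p_2 p_3}$ be the fundamental unit of $\mathbb{Q}(\sqrt{p_1 p_2 p_3})$ with $x, y > 0$. Then $\frac{x+1}{2} = p_1 p_2 m^2$ for some positive integer $m$; i.e., the squarefree part of $N(u_2 + 1)$ is $p_1 p_2$. -/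
/-- If `c * a² - d * b² = 1` and `p ∣ d`, then `c` is a square mod `p`. -/
private lemma aux_sqmod (p : ℕ) [Fact p.Prime] (c d a b : ℤ) (hdp : (p : ℤ) ∣ d)
    (heq : c * a ^ 2 - d * b ^ 2 = 1) : IsSquare ((c : ZMod p)) := by
  have h0 : ((d : ℤ) : ZMod p) = 0 := by
    rwa [ZMod.intCast_zmod_eq_zero_iff_dvd]
  have h1 : (c : ZMod p) * (a : ZMod p) ^ 2 = 1 := by
    have h := congrArg (fun z : ℤ => (z : ZMod p)) heq
    push_cast at h
    rw [h0] at h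
    linear_combination h
  have ha : (a : ZMod p) ≠ 0 := by
    intro h
    rw [h] at h1
    simp at h1
  refine ⟨((a : ZMod p))⁻¹, ?_⟩
  field_simp
  linear_combination h1

private lemma aux_leg_s12 (p q : ℕ) [Fact p.Prime] [Fact q.Prime] (hne : q ≠ p)
    (hsq : IsSquare (((q : ℤ) : ZMod p))) : legendreSym p q = 1 := by
  have h0 : ((q : ℤ) : ZMod p) ≠ 0 := by
    intro h
    rw [ZMod.intCast_zmod_eq_zero_iff_dvd, Int.natCast_dvd_natCast] at h
    exact hne ((Nat.prime_dvd_prime_iff_eq Fact.out Fact.out).mp h).symm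
  exact (legendreSym.eq_one_iff p h0).mpr hsq

private lemma aux_factor (d1 d2 A B t : ℤ) (hd1 : 0 < d1) (hd2 : 0 < d2)
    (hA : 0 < A) (hB : 0 < B)
    (h1 : d1 ∣ A) (h2 : d2 ∣ B) (hcop : IsCoprime A B)
    (hprod : A * B = (d1 * d2) * t ^ 2) :
    ∃ a b : ℤ, 0 ≤ a ∧ 0 ≤ b ∧ A = d1 * a ^ 2 ∧ B = d2 * b ^ 2 := by
  obtain ⟨u, hu⟩ := h1
  obtain ⟨v, hv⟩ := h2
  have hne : d1 * d2 ≠ 0 := by positivity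
  have huv : u * v = t ^ 2 := by
    apply mul_left_cancel₀ hne
    calc d1 * d2 * (u * v) = (d1 * u) * (d2 * v) := by ring
    _ = A * B := by rw [← hu, ← hv]
    _ = (d1 * d2) * t ^ 2 := hprod
  have hcuv : IsCoprime u v :=
    (hcop.of_isCoprime_of_dvd_left ⟨d1, by rw [hu]; ring⟩).of_isCoprime_of_dvd_right
      ⟨d2, by rw [hv]; ring⟩
  have hupos : 0 < u := by nlinarith [hu, hA, hd1]
  have hvpos : 0 < v := by nlinarith [hv, hB, hd2]
  obtain ⟨a, ha⟩ := Int.sq_of_isCoprime hcuv huv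
  obtain ⟨b, hb⟩ := Int.sq_of_isCoprime hcuv.symm (by rw [mul_comm]; exact huv)
  have ha' : u = a ^ 2 := by
    rcases ha with h | h
    · exact h
    · nlinarith [sq_nonneg a]
  have hb' : v = b ^ 2 := by
    rcases hb with h | h
    · exact h
    · nlinarith [sq_nonneg b]
  exact ⟨|a|, |b|, abs_nonneg a, abs_nonneg b, by rw [hu, ha', sq_abs],
    by rw [hv, hb', sq_abs]⟩

set_option maxHeartbeats 1600000 in
theorem stmt_12 (p1 p2 p3 : ℕ) [Fact p1.Prime] [Fact p2.Prime] [Fact p3.Prime]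
    (h12 : p1 ≠ p2) (h13 : p1 ≠ p3) (h23 : p2 ≠ p3)
    (m1 : p1 % 4 = 3) (m2 : p2 % 4 = 3) (m3 : p3 % 4 = 1)
    (h8 : (p1 * p2 * p3) % 8 = 1)
    (hleg13 : legendreSym p3 p1 = -1) (hleg23 : legendreSym p3 p2 = -1)
    (x y : ℤ) (hx : 0 < x) (hy : 0 < y)
    (hunit : x ^ 2 - (p1 : ℤ) * p2 * p3 * y ^ 2 = 1 ∨
      x ^ 2 - (p1 : ℤ) * p2 * p3 * y ^ 2 = -1)
    (hfund : ∀ a b : ℤ, 0 < a → 0 < b →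
      (a ^ 2 - (p1 : ℤ) * p2 * p3 * b ^ 2 = 1 ∨ a ^ 2 - (p1 : ℤ) * p2 * p3 * b ^ 2 = -1) →
      (x : ℝ) + y * Real.sqrt (p1 * p2 * p3) ≤ (a : ℝ) + b * Real.sqrt (p1 * p2 * p3)) :
    ∃ m : ℤ, 0 < m ∧ (x + 1) / 2 = (p1 : ℤ) * p2 * m ^ 2 := by
  have hp1 : p1.Prime := Fact.out
  have hp2 : p2.Prime := Fact.out
  have hp3 : p3.Prime := Fact.out
  have hp1z : Prime (p1 : ℤ) := Nat.prime_iff_prime_int.mp hp1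
  have hp2z : Prime (p2 : ℤ) := Nat.prime_iff_prime_int.mp hp2
  have hp3z : Prime (p3 : ℤ) := Nat.prime_iff_prime_int.mp hp3
  have hp1pos : (0 : ℤ) < p1 := by exact_mod_cast hp1.pos
  have hp2pos : (0 : ℤ) < p2 := by exact_mod_cast hp2.pos
  have hp3pos : (0 : ℤ) < p3 := by exact_mod_cast hp3.pos
  have hp1ne2 : p1 ≠ 2 := by intro h; rw [h] at m1; norm_num at m1
  -- the norm of the fundamental unit is 1
  have h1 : x ^ 2 - (p1 : ℤ) * p2 * p3 * y ^ 2 = 1 := by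
    rcases hunit with h | h
    · exact h
    · exfalso
      have hc := congrArg (fun z : ℤ => (z : ZMod p1)) h
      push_cast at hc
      rw [ZMod.natCast_self] at hc
      have hsq : IsSquare (-1 : ZMod p1) := ⟨x, by linear_combination -hc⟩
      rw [ZMod.exists_sq_eq_neg_one_iff] at hsq
      exact hsq m1
  -- x is odd
  have hxodd : Odd x := by
    by_contra hodd
    rw [Int.not_odd_iff_even] at hodd
    obtain ⟨c, hc⟩ := hodd
    have e1 : ((p1 : ℕ) : ZMod 4) = 3 := by rw [← ZMod.natCast_mod, m1]; rfl
    have e2 : ((p2 : ℕ) : ZMod 4) = 3 := by rw [← ZMod.natCast_mod, m2]; rfl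
    have e3 : ((p3 : ℕ) : ZMod 4) = 1 := by rw [← ZMod.natCast_mod, m3]; rfl
    have hdec : ∀ z w : ZMod 4, ¬((z + z) ^ 2 - 3 * 3 * 1 * w ^ 2 = 1) := by decide
    have h4 : ((c : ZMod 4) + c) ^ 2 - 3 * 3 * 1 * (y : ZMod 4) ^ 2 = 1 := by
      have h := congrArg (fun z : ℤ => (z : ZMod 4)) h1
      push_cast at h
      rw [e1, e2, e3, hc] at h
      push_cast at h
      linear_combination h
    exact hdec _ _ h4
  obtain ⟨k, hk⟩ := hxodd
  subst hk
  -- y is even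
  have hyeven : Even y := by
    have hoddn : Odd ((p1 : ℤ) * p2 * p3) := by
      have o1 : Odd (p1 : ℤ) := by
        refine Int.odd_coe_nat p1 |>.mpr (Nat.odd_iff.mpr ?_); omega
      have o2 : Odd (p2 : ℤ) := by
        refine Int.odd_coe_nat p2 |>.mpr (Nat.odd_iff.mpr ?_); omega
      have o3 : Odd (p3 : ℤ) := by
        refine Int.odd_coe_nat p3 |>.mpr (Nat.odd_iff.mpr ?_); omega
      exact (o1.mul o2).mul o3
    have heven : Even ((p1 : ℤ) * p2 * p3 * y ^ 2) :=
      ⟨2 * (k ^ 2 + k), by linear_combination -h1⟩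
    rcases Int.even_mul.mp heven with h | h
    · exact (Int.not_odd_iff_even.mpr h hoddn).elim
    · exact (Int.even_pow.mp h).1
  obtain ⟨t, ht⟩ := hyeven
  subst ht
  have htpos : 0 < t := by linarith
  -- basic facts
  have hnpos : (0 : ℤ) < (p1 : ℤ) * p2 * p3 := by positivity
  have hAB : (k + 1) * k = ((p1 : ℤ) * p2 * p3) * t ^ 2 := by
    have h4 : (4 : ℤ) * ((k + 1) * k) = 4 * (((p1 : ℤ) * p2 * p3) * t ^ 2) := by
      linear_combination h1
    have := mul_left_cancel₀ (by norm_num : (4 : ℤ) ≠ 0) h4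
    exact this
  have hknn : 0 ≤ k := by omega
  have hk0 : 0 < k := by
    rcases eq_or_lt_of_le hknn with h | h
    · exfalso
      rw [← h] at hAB
      simp at hAB
      nlinarith
    · exact h
  have hApos : (0 : ℤ) < k + 1 := by omega
  have hcop : IsCoprime (k + 1 : ℤ) k := ⟨1, -1, by ring⟩
  -- each prime divides exactly one of k+1, k
  have hsplit : ∀ q : ℕ, Prime (q : ℤ) → (q : ℤ) ∣ (p1 : ℤ) * p2 * p3 →
      ((q : ℤ) ∣ (k + 1) ∧ ¬(q : ℤ) ∣ k) ∨ ((q : ℤ) ∣ k ∧ ¬(q : ℤ) ∣ (k + 1)) := by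
    intro q hq hqn
    have hdvd : (q : ℤ) ∣ (k + 1) * k := by
      rw [hAB]; exact hqn.mul_right _
    have hnotboth : ¬((q : ℤ) ∣ (k + 1) ∧ (q : ℤ) ∣ k) := fun ⟨ha, hb⟩ =>
      hq.not_unit (hcop.isUnit_of_dvd' ha hb)
    rcases hq.2.2 _ _ hdvd with h | h
    · exact Or.inl ⟨h, fun hb => hnotboth ⟨h, hb⟩⟩
    · exact Or.inr ⟨h, fun ha => hnotboth ⟨ha, h⟩⟩
  have hs1 := hsplit p1 hp1z ⟨(p2 : ℤ) * p3, by ring⟩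
  have hs2 := hsplit p2 hp2z ⟨(p1 : ℤ) * p3, by ring⟩
  have hs3 := hsplit p3 hp3z ⟨(p1 : ℤ) * p2, by ring⟩
  have hc12 : IsCoprime ((p1 : ℤ)) (p2 : ℤ) :=
    ((Nat.coprime_primes hp1 hp2).mpr h12).isCoprime
  have hc13 : IsCoprime ((p1 : ℤ)) (p3 : ℤ) :=
    ((Nat.coprime_primes hp1 hp3).mpr h13).isCoprime
  have hc23 : IsCoprime ((p2 : ℤ)) (p3 : ℤ) :=
    ((Nat.coprime_primes hp2 hp3).mpr h23).isCoprime
  have hneg1p3 : IsSquare (-1 : ZMod p3) := by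
    rw [ZMod.exists_sq_eq_neg_one_iff]; omega
  rcases hs1 with ⟨hA1, hB1⟩ | ⟨hB1, hA1⟩ <;>
    rcases hs2 with ⟨hA2, hB2⟩ | ⟨hB2, hA2⟩ <;>
      rcases hs3 with ⟨hA3, hB3⟩ | ⟨hB3, hA3⟩
  -- case d1 = p1*p2*p3, d2 = 1
  · exfalso
    obtain ⟨a, b, ha0, hb0, hAe, hBe⟩ :=
      aux_factor ((p1 : ℤ) * p2 * p3) 1 (k + 1) k t hnpos one_pos hApos hk0
        ((hc13.mul_left hc23).mul_dvd (hc12.mul_dvd hA1 hA2) hA3) (one_dvd _) hcop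
        (by linear_combination hAB)
    have heq : (p1 : ℤ) * p2 * p3 * a ^ 2 - 1 * b ^ 2 = 1 := by
      linear_combination hBe - hAe
    have hsq := aux_sqmod p1 (-1) (-((p1 : ℤ) * p2 * p3)) b a
      ⟨-((p2 : ℤ) * p3), by ring⟩ (by linear_combination heq)
    have hsq' : IsSquare (-1 : ZMod p1) := by
      have : (((-1 : ℤ)) : ZMod p1) = -1 := by push_cast; ring
      rwa [this] at hsq
    rw [ZMod.exists_sq_eq_neg_one_iff] at hsq'
    exact hsq' m1
  -- case d1 = p1*p2, d2 = p3  (the good case)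
  · obtain ⟨a, b, ha0, hb0, hAe, hBe⟩ :=
      aux_factor ((p1 : ℤ) * p2) (p3 : ℤ) (k + 1) k t (by positivity) hp3pos hApos hk0
        (hc12.mul_dvd hA1 hA2) hB3 hcop (by linear_combination hAB)
    have hane : a ≠ 0 := by
      intro h
      rw [h] at hAe
      simp at hAe
      omega
    refine ⟨a, lt_of_le_of_ne ha0 (Ne.symm hane), ?_⟩
    have h2 : (2 * k + 1 + 1 : ℤ) = 2 * (k + 1) := by ring
    rw [h2, Int.mul_ediv_cancel_left _ two_ne_zero, hAe]
  -- case d1 = p1*p3, d2 = p2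
  · exfalso
    obtain ⟨a, b, ha0, hb0, hAe, hBe⟩ :=
      aux_factor ((p1 : ℤ) * p3) (p2 : ℤ) (k + 1) k t (by positivity) hp2pos hApos hk0
        (hc13.mul_dvd hA1 hA3) hB2 hcop (by linear_combination hAB)
    have heq : (p1 : ℤ) * p3 * a ^ 2 - (p2 : ℤ) * b ^ 2 = 1 := by
      linear_combination hBe - hAe
    have hsq := aux_sqmod p3 (-(p2 : ℤ)) (-((p1 : ℤ) * p3)) b a
      ⟨-(p1 : ℤ), by ring⟩ (by linear_combination heq)
    have hsq' : IsSquare (((p2 : ℤ) : ZMod p3)) := by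
      have h := hneg1p3.mul hsq
      have e : (-1 : ZMod p3) * ((-(p2 : ℤ) : ℤ) : ZMod p3) = ((p2 : ℤ) : ZMod p3) := by
        push_cast; ring
      rwa [e] at h
    have := aux_leg_s12 p3 p2 h23 hsq'
    rw [hleg23] at this
    norm_num at this
  -- case d1 = p1, d2 = p2*p3
  · exfalso
    obtain ⟨a, b, ha0, hb0, hAe, hBe⟩ :=
      aux_factor ((p1 : ℤ)) ((p2 : ℤ) * p3) (k + 1) k t hp1pos (by positivity) hApos hk0
        hA1 (hc23.mul_dvd hB2 hB3) hcop (by linear_combination hAB)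
    have heq : (p1 : ℤ) * a ^ 2 - (p2 : ℤ) * p3 * b ^ 2 = 1 := by
      linear_combination hBe - hAe
    have hsq := aux_sqmod p3 ((p1 : ℤ)) ((p2 : ℤ) * p3) a b ⟨(p2 : ℤ), by ring⟩ heq
    have := aux_leg_s12 p3 p1 h13 hsq
    rw [hleg13] at this
    norm_num at this
  -- case d1 = p2*p3, d2 = p1
  · exfalso
    obtain ⟨a, b, ha0, hb0, hAe, hBe⟩ :=
      aux_factor ((p2 : ℤ) * p3) (p1 : ℤ) (k + 1) k t (by positivity) hp1pos hApos hk0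
        (hc23.mul_dvd hA2 hA3) hB1 hcop (by linear_combination hAB)
    have heq : (p2 : ℤ) * p3 * a ^ 2 - (p1 : ℤ) * b ^ 2 = 1 := by
      linear_combination hBe - hAe
    have hsq := aux_sqmod p3 (-(p1 : ℤ)) (-((p2 : ℤ) * p3)) b a
      ⟨-(p2 : ℤ), by ring⟩ (by linear_combination heq)
    have hsq' : IsSquare (((p1 : ℤ) : ZMod p3)) := by
      have h := hneg1p3.mul hsq
      have e : (-1 : ZMod p3) * ((-(p1 : ℤ) : ℤ) : ZMod p3) = ((p1 : ℤ) : ZMod p3) := by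
        push_cast; ring
      rwa [e] at h
    have := aux_leg_s12 p3 p1 h13 hsq'
    rw [hleg13] at this
    norm_num at this
  -- case d1 = p2, d2 = p1*p3
  · exfalso
    obtain ⟨a, b, ha0, hb0, hAe, hBe⟩ :=
      aux_factor ((p2 : ℤ)) ((p1 : ℤ) * p3) (k + 1) k t hp2pos (by positivity) hApos hk0
        hA2 (hc13.mul_dvd hB1 hB3) hcop (by linear_combination hAB)
    have heq : (p2 : ℤ) * a ^ 2 - (p1 : ℤ) * p3 * b ^ 2 = 1 := by
      linear_combination hBe - hAe
    have hsq := aux_sqmod p3 ((p2 : ℤ)) ((p1 : ℤ) * p3) a b ⟨(p1 : ℤ), by ring⟩ heq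
    have := aux_leg_s12 p3 p2 h23 hsq
    rw [hleg23] at this
    norm_num at this
  -- case d1 = p3, d2 = p1*p2
  · exfalso
    obtain ⟨a, b, ha0, hb0, hAe, hBe⟩ :=
      aux_factor ((p3 : ℤ)) ((p1 : ℤ) * p2) (k + 1) k t hp3pos (by positivity) hApos hk0
        hA3 (hc12.mul_dvd hB1 hB2) hcop (by linear_combination hAB)
    have heq : (p3 : ℤ) * a ^ 2 - (p1 : ℤ) * p2 * b ^ 2 = 1 := by
      linear_combination hBe - hAe
    have hsq := aux_sqmod p1 ((p3 : ℤ)) ((p1 : ℤ) * p2) a b ⟨(p2 : ℤ), by ring⟩ heq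
    have := aux_leg_s12 p1 p3 (Ne.symm h13) hsq
    rw [legendreSym.quadratic_reciprocity_one_mod_four m3 hp1ne2, hleg13] at this
    norm_num at this
  -- case d1 = 1, d2 = p1*p2*p3 : contradicts fundamentality
  · exfalso
    obtain ⟨a, b, ha0, hb0, hAe, hBe⟩ :=
      aux_factor 1 ((p1 : ℤ) * p2 * p3) (k + 1) k t one_pos hnpos hApos hk0
        (one_dvd _) ((hc13.mul_left hc23).mul_dvd (hc12.mul_dvd hB1 hB2) hB3)
        hcop (by linear_combination hAB)
    have hapos : 0 < a := by
      rcases eq_or_lt_of_le ha0 with h | h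
      · exfalso; rw [← h] at hAe; simp at hAe; omega
      · exact h
    have hbpos : 0 < b := by
      rcases eq_or_lt_of_le hb0 with h | h
      · exfalso; rw [← h] at hBe; simp at hBe; omega
      · exact h
    have heq : a ^ 2 - (p1 : ℤ) * p2 * p3 * b ^ 2 = 1 := by
      linear_combination hBe - hAe
    -- t = a * b
    have htab : t = a * b := by
      have hsq : t ^ 2 = (a * b) ^ 2 := by
        apply mul_left_cancel₀ (ne_of_gt hnpos)
        calc ((p1 : ℤ) * p2 * p3) * t ^ 2 = (k + 1) * k := hAB.symm
        _ = (1 * a ^ 2) * (((p1 : ℤ) * p2 * p3) * b ^ 2) := by rw [← hAe, ← hBe]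
        _ = ((p1 : ℤ) * p2 * p3) * (a * b) ^ 2 := by ring
      have h0 : (t - a * b) * (t + a * b) = 0 := by linear_combination hsq
      rcases mul_eq_zero.mp h0 with h | h
      · linarith
      · nlinarith
    have hle := hfund a b hapos hbpos (Or.inl heq)
    set r := Real.sqrt ((p1 : ℝ) * p2 * p3) with hr
    have hr2 : r ^ 2 = (p1 : ℝ) * p2 * p3 := Real.sq_sqrt (by positivity)
    have hr1 : 1 ≤ r := by
      rw [hr, Real.one_le_sqrt]
      have : (1 : ℤ) ≤ (p1 : ℤ) * p2 * p3 := hnpos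
      exact_mod_cast this
    have haR : (1 : ℝ) ≤ (a : ℝ) := by exact_mod_cast hapos
    have hbR : (1 : ℝ) ≤ (b : ℝ) := by exact_mod_cast hbpos
    have hAe' : (k : ℝ) + 1 = (a : ℝ) ^ 2 := by exact_mod_cast (by linarith : (k : ℤ) + 1 = a ^ 2)
    have hBe' : (k : ℝ) = ((p1 : ℝ) * p2 * p3) * (b : ℝ) ^ 2 := by exact_mod_cast hBe
    have htab' : (t : ℝ) = (a : ℝ) * b := by exact_mod_cast htab
    push_cast at hle
    have hs : ((a : ℝ) + b * r) ^ 2 = (2 * (k : ℝ) + 1) + ((t : ℝ) + t) * r := by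
      linear_combination ((b : ℝ) ^ 2) * hr2 - hAe' - hBe' - (2 * r) * htab'
    have hbr : (1 : ℝ) ≤ (b : ℝ) * r := by
      calc (1 : ℝ) = 1 * 1 := by ring
      _ ≤ (b : ℝ) * r := by
          apply mul_le_mul hbR hr1 (by norm_num) (by linarith)
    have hs2 : (2 : ℝ) ≤ (a : ℝ) + b * r := by linarith
    have hS : ((a : ℝ) + b * r) ^ 2 ≤ (a : ℝ) + b * r := by linarith [hle, hs]
    generalize hSdef : (a : ℝ) + (b : ℝ) * r = S at hS hs2
    have h3 : (0 : ℝ) ≤ (S - 2) * S := mul_nonneg (by linarith) (by linarith)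
    have h4 : (S - 2) * S = S ^ 2 - 2 * S := by ring
    linarith
end
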